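/- Derivative of the deviation matrix: let n ≥ 1 and t₀ ∈ ℝ. Let P : ℝ → (n×n real matrices) and π : ℝ → ℝⁿ (row vectors) both be differentiable at t₀, with derivatives P′ and π′ at t₀. Assume there is a neighborhood U of t₀ such that for all t ∈ U: every row of P(t) sums to 1, the entries of π(t) sum to 1, π(t)·P(t) = π(t), and A(t) = I − P(t) + 1·π(t) is invertible. Define D(t) = A(t)⁻¹ − 1·π(t). Then D is differentiable at t₀ with derivative D′ = D₀·P′·D₀ − Π·P′·D₀·D₀, where D₀ = D(t₀) and Π = 1·π(t₀); equivalently, D′ = −Π′·D₀ + D₀·P′·D₀ with Π′ = Π·P′·D₀. -/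

import Mathlib

/-!
With `A = 1 - P + Π` and `Z = A⁻¹`, inversion in the normed ring of matrices gives
`(A⁻¹)' = -Z A' Z` with `A' = -P' + Π'`. Near `t₀` the identities `P Π = Π`, `Π Π = Π` and
`Π P = Π` hold; since `Π'` again has equal rows, differentiating them yields `P' Π = 0`,
`Π' Π = 0` and `Π' (1 - P) = Π P'`, i.e. `Π' = Π P' Z`. Together with `Π Z = Z Π = Π` this
rewrites `-Z A' Z - Π'` as `D P' D - Π P' D D` for `D = Z - Π`.
-/

open Matrix Filter Topology

section Calculus

variable {𝕜 R : Type*} [NontriviallyNormedField 𝕜] [NormedRing R] [NormedAlgebra 𝕜 R] {t : 𝕜}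

theorem HasDerivAt.ringInverse [HasSummableGeomSeries R] {f : 𝕜 → R} {f' : R}
    (hf : HasDerivAt f f' t) (ht : IsUnit (f t)) :
    HasDerivAt (fun s => Ring.inverse (f s))
      (-(Ring.inverse (f t) * f' * Ring.inverse (f t))) t := by
  obtain ⟨u, hu⟩ := ht
  simpa [← hu] using (hu ▸ hasFDerivAt_ringInverse (𝕜 := 𝕜) u).comp_hasDerivAt t hf

theorem HasDerivAt.add_mul_eq_of_eventually_mul_eq {f g h : 𝕜 → R} {f' g' h' : R}
    (hf : HasDerivAt f f' t) (hg : HasDerivAt g g' t) (hh : HasDerivAt h h' t)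
    (hfg : ∀ᶠ s in 𝓝 t, f s * g s = h s) : f' * g t + f t * g' = h' :=
  (hf.fun_mul hg).unique (hh.congr_of_eventuallyEq hfg)

end Calculus

theorem deviation_derivative_identity {R : Type*} [Ring R] {P P' Q Q' Z : R}
    (hZA : Z * (1 - P + Q) = 1) (hAZ : (1 - P + Q) * Z = 1)
    (hPQ : P * Q = Q) (hQP : Q * P = Q) (hQQ : Q * Q = Q)
    (hP'Q : P' * Q = 0) (hQ'Q : Q' * Q = 0) (hQQ' : Q * Q' = Q')
    (hQ'P : Q' * P + Q * P' = Q') :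
    -(Z * (-P' + Q') * Z) - Q' = (Z - Q) * P' * (Z - Q) - Q * P' * (Z - Q) * (Z - Q) := by
  have hQZ : Q * Z = Q := by
    calc Q * Z = Q * (1 - P + Q) * Z := by
          rw [mul_add, mul_sub, mul_one, hQP, hQQ, sub_self, zero_add]
      _ = Q := by rw [mul_assoc, hAZ, mul_one]
  have hZQ : Z * Q = Q := by
    calc Z * Q = Z * ((1 - P + Q) * Q) := by
          rw [add_mul, sub_mul, one_mul, hPQ, hQQ, sub_self, zero_add]
      _ = Q := by rw [← mul_assoc, hZA, one_mul]
  have hQ' : Q' = Q * P' * Z := by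
    calc Q' = Q' * (1 - P + Q) * Z := by rw [mul_assoc, hAZ, mul_one]
      _ = Q * P' * Z := by
          rw [mul_add, mul_sub, mul_one, hQ'Q, add_zero, sub_eq_of_eq_add' hQ'P.symm]
  have hZQ' : Z * Q' = Q' := by rw [← hQQ', ← mul_assoc, hZQ]
  have hP'D (X : R) : X * P' * (Z - Q) = X * P' * Z := by
    rw [mul_sub, mul_assoc X P' Q, hP'Q, mul_zero, sub_zero]
  have hQP'ZD : Q * P' * Z * (Z - Q) = Q * P' * Z * Z := by
    rw [mul_sub, mul_assoc (Q * P') Z Q, hZQ, mul_assoc Q P' Q, hP'Q, mul_zero, sub_zero]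
  calc -(Z * (-P' + Q') * Z) - Q' = Z * P' * Z - Q' * Z - Q' := by
        rw [mul_add, hZQ']; noncomm_ring
    _ = (Z - Q) * P' * Z - Q * P' * Z * Z := by rw [hQ']; noncomm_ring
    _ = _ := by rw [hP'D, hP'D, hQP'ZD]

namespace Matrix

theorem mul_replicateRow_of_sum_eq_one {α l m n : Type*} [NonAssocSemiring α] [Fintype m]
    {M : Matrix l m α} (hM : ∀ i, ∑ j, M i j = 1) (v : n → α) :
    M * replicateRow m v = replicateRow l v := by
  ext i j
  simp [mul_apply, ← Finset.sum_mul, hM]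

section LinftyOp

attribute [local instance] Matrix.linftyOpNormedAddCommGroup Matrix.linftyOpNormedSpace

variable {𝕜 E : Type*} [NontriviallyNormedField 𝕜] [NormedAddCommGroup E] [NormedSpace 𝕜 E]
  {m n : Type*} [Fintype m] [Fintype n] {t : 𝕜}

-- The `L∞` operator norm is set up so that its topology is the product topology.
theorem hasDerivAt_iff_forall_apply {f : 𝕜 → Matrix m n E} {f' : Matrix m n E} :
    HasDerivAt f f' t ↔ ∀ i j, HasDerivAt (fun s => f s i j) (f' i j) t := by
  refine hasDerivAt_iff_tendsto_slope.trans ?_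
  simp only [hasDerivAt_iff_tendsto_slope]
  exact tendsto_pi_nhds.trans (forall_congr' fun i => tendsto_pi_nhds)

theorem _root_.HasDerivAt.replicateRow {v : 𝕜 → n → E} {v' : n → E} (hv : HasDerivAt v v' t) :
    HasDerivAt (fun s => replicateRow m (v s)) (replicateRow m v') t :=
  hasDerivAt_iff_forall_apply.2 fun _ j => hasDerivAt_pi.1 hv j

end LinftyOp

end Matrix

section DeviationMatrix

variable {𝕜 : Type*} [NontriviallyNormedField 𝕜] {n : Type*} [Fintype n] [DecidableEq n]

noncomputable def deviationMatrix (P : Matrix n n 𝕜) (π : n → 𝕜) : Matrix n n 𝕜 :=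
  (1 - P + replicateRow n π)⁻¹ - replicateRow n π

attribute [local instance] Matrix.linftyOpNormedRing Matrix.linftyOpNormedAlgebra

theorem hasDerivAt_deviationMatrix [CompleteSpace 𝕜] {P : 𝕜 → Matrix n n 𝕜} {π : 𝕜 → n → 𝕜}
    {P' : Matrix n n 𝕜} {π' : n → 𝕜} {t : 𝕜} (hP : HasDerivAt P P' t) (hπ : HasDerivAt π π' t)
    (hrow : ∀ᶠ s in 𝓝 t, ∀ i, ∑ j, P s i j = 1) (hsum : ∀ᶠ s in 𝓝 t, ∑ i, π s i = 1)
    (hstat : ∀ᶠ s in 𝓝 t, π s ᵥ* P s = π s) (hA : IsUnit (1 - P t + replicateRow n (π t))) :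
    HasDerivAt (fun s => deviationMatrix (P s) (π s))
      (deviationMatrix (P t) (π t) * P' * deviationMatrix (P t) (π t)
        - replicateRow n (π t) * P' * deviationMatrix (P t) (π t)
          * deviationMatrix (P t) (π t)) t := by
  set Q := fun s => replicateRow n (π s)
  have hQ : HasDerivAt Q (replicateRow n π') t := hπ.replicateRow
  have hPQ : ∀ᶠ s in 𝓝 t, P s * Q s = Q s :=
    hrow.mono fun s hs => mul_replicateRow_of_sum_eq_one hs _
  have hQQ : ∀ᶠ s in 𝓝 t, Q s * Q s = Q s :=
    hsum.mono fun s hs => mul_replicateRow_of_sum_eq_one (fun _ => hs) _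
  have hQP : ∀ᶠ s in 𝓝 t, Q s * P s = Q s :=
    hstat.mono fun s hs => by simp only [Q, ← replicateRow_vecMul, hs]
  have hPQ' : P t * replicateRow n π' = replicateRow n π' :=
    mul_replicateRow_of_sum_eq_one hrow.self_of_nhds _
  have hQQ' : Q t * replicateRow n π' = replicateRow n π' :=
    mul_replicateRow_of_sum_eq_one (fun _ => hsum.self_of_nhds) _
  have hP'Q : P' * Q t = 0 := by
    simpa only [hPQ', add_eq_right] using hP.add_mul_eq_of_eventually_mul_eq hQ hQ hPQ
  have hQ'Q : replicateRow n π' * Q t = 0 := by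
    simpa only [hQQ', add_eq_right] using hQ.add_mul_eq_of_eventually_mul_eq hQ hQ hQQ
  -- The norm's uniformity is the product one only up to unfolding, so instance search
  -- does not see `Matrix.instCompleteSpace`.
  have : @CompleteSpace (Matrix n n 𝕜) PseudoMetricSpace.toUniformSpace :=
    FiniteDimensional.complete 𝕜 _
  have hZ := ((hP.const_sub 1).fun_add hQ).ringInverse hA
  simp only [deviationMatrix, nonsing_inv_eq_ringInverse]
  refine (hZ.sub hQ).congr_deriv ?_
  exact deviation_derivative_identity (Ring.inverse_mul_cancel _ hA)
    (Ring.mul_inverse_cancel _ hA) hPQ.self_of_nhds hQP.self_of_nhds hQQ.self_of_nhds hP'Q hQ'Q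
    hQQ' (hQ.add_mul_eq_of_eventually_mul_eq hP hQ hQP)

end DeviationMatrix

theorem deviation_matrix_derivative_general {n : ℕ} (t0 : ℝ)
    (P : ℝ → Matrix (Fin n) (Fin n) ℝ) (pi : ℝ → Fin n → ℝ)
    (P' : Matrix (Fin n) (Fin n) ℝ) (pi' : Fin n → ℝ)
    (hP : ∀ i j, HasDerivAt (fun t => P t i j) (P' i j) t0)
    (hpi : ∀ i, HasDerivAt (fun t => pi t i) (pi' i) t0)
    (U : Set ℝ) (hU : U ∈ nhds t0)
    (hrow : ∀ t ∈ U, ∀ i, ∑ j, P t i j = 1)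
    (hsum : ∀ t ∈ U, ∑ i, pi t i = 1)
    (hstat : ∀ t ∈ U, Matrix.vecMul (pi t) (P t) = pi t)
    (hinv : ∀ t ∈ U, IsUnit (1 - P t + Matrix.of fun _ j => pi t j))
    (D : ℝ → Matrix (Fin n) (Fin n) ℝ)
    (hD : ∀ t, D t = (1 - P t + Matrix.of fun _ j => pi t j)⁻¹
        - Matrix.of fun _ j => pi t j) :
    ∀ i j, HasDerivAt (fun t => D t i j)
      ((D t0 * P' * D t0
        - (Matrix.of fun _ j => pi t0 j) * P' * D t0 * D t0
        : Matrix (Fin n) (Fin n) ℝ) i j) t0 := by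
  obtain rfl : D = fun t => deviationMatrix (P t) (pi t) := funext hD
  exact Matrix.hasDerivAt_iff_forall_apply.1 <|
    hasDerivAt_deviationMatrix (Matrix.hasDerivAt_iff_forall_apply.2 hP) (hasDerivAt_pi.2 hpi)
      (eventually_of_mem hU hrow) (eventually_of_mem hU hsum) (eventually_of_mem hU hstat)
      (hinv t0 (mem_of_mem_nhds hU))

theorem deviation_matrix_derivative {n : ℕ} (hn : 1 ≤ n) (t0 : ℝ)
    (P : ℝ → Matrix (Fin n) (Fin n) ℝ) (pi : ℝ → Fin n → ℝ)
    (P' : Matrix (Fin n) (Fin n) ℝ) (pi' : Fin n → ℝ)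
    (hP : ∀ i j, HasDerivAt (fun t => P t i j) (P' i j) t0)
    (hpi : ∀ i, HasDerivAt (fun t => pi t i) (pi' i) t0)
    (U : Set ℝ) (hU : U ∈ nhds t0)
    (hrow : ∀ t ∈ U, ∀ i, ∑ j, P t i j = 1)
    (hsum : ∀ t ∈ U, ∑ i, pi t i = 1)
    (hstat : ∀ t ∈ U, Matrix.vecMul (pi t) (P t) = pi t)
    (hinv : ∀ t ∈ U, IsUnit (1 - P t + Matrix.of fun _ j => pi t j))
    (D : ℝ → Matrix (Fin n) (Fin n) ℝ)
    (hD : ∀ t, D t = (1 - P t + Matrix.of fun _ j => pi t j)⁻¹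
        - Matrix.of fun _ j => pi t j) :
    ∀ i j, HasDerivAt (fun t => D t i j)
      ((D t0 * P' * D t0
        - (Matrix.of fun _ j => pi t0 j) * P' * D t0 * D t0
        : Matrix (Fin n) (Fin n) ℝ) i j) t0 :=
  deviation_matrix_derivative_general t0 P pi P' pi' hP hpi U hU hrow hsum hstat hinv D hD
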